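/- arXiv:1510.04855 — 4 statements merged into one kernel-verified Lean document; each statement's English description precedes it below -/
import Mathlib

section
/- If g is a 1-periodic measurable function on ℝ taking values in {0,1} almost everywhere, and the Gagliardo seminorm ∫_{-1/2}^{1/2} ∫_{-1/2}^{1/2} |g(x+y)-g(x)|²/|y|² dx dy is finite (i.e., g ∈ H^{1/2}(ℝ/ℤ)), then either g = 0 almost everywhere or g = 1 almost everywhere. -/
open MeasureTheory Set Filter Function
open scoped ENNReal

/-!
For `{0,1}`-valued `g` one has `|a - c|² ≤ |a - b|² + |b - c|²`, so the shift energy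
`F y = ∫₀¹ |g (x + y) - g x|² dx` is subadditive and `Φ y = F y / y²` satisfies `2 Φ (2u) ≤ Φ u`.
By the substitution `y = 2u`, the integral of `Φ` over `(-a, a]` is then at most its integral over
`(-a/2, a/2]`; iterating, a finite Gagliardo integral is bounded by the `Φ`-mass of ever smaller
neighbourhoods of `0`, which tends to zero. Hence `F = 0` a.e., and
`(∫ g) (∫ (1 - g)) = ∫∫ g (x + y) (1 - g x) ≤ ∫ F = 0` forces `g = 0` or `g = 1` a.e.
-/

section Doubling

variable {Φ : ℝ → ℝ≥0∞} {c : ℝ}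

theorem setLIntegral_Ioc_le_div_of_dilation (hc : 0 < c)
    (hΦ : ∀ u, ENNReal.ofReal c * Φ (c * u) ≤ Φ u) (a b : ℝ) :
    ∫⁻ y in Ioc a b, Φ y ≤ ∫⁻ y in Ioc (a / c) (b / c), Φ y := by
  have himage : (c * ·) '' Ioc (a / c) (b / c) = Ioc a b := by
    rw [image_mul_left_Ioc hc, mul_div_cancel₀ _ hc.ne', mul_div_cancel₀ _ hc.ne']
  rw [← himage, lintegral_image_eq_lintegral_abs_deriv_mul (f := (c * ·)) measurableSet_Ioc
    (fun x _ => ((hasDerivAt_id x).const_mul c).hasDerivWithinAt)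
    (mul_right_injective₀ hc.ne').injOn]
  refine lintegral_mono fun u => ?_
  simpa [abs_of_pos hc] using hΦ u

theorem setLIntegral_Ioc_neg_eq_zero_of_dilation (hc : 1 < c)
    (hΦ : ∀ u, ENNReal.ofReal c * Φ (c * u) ≤ Φ u) (a : ℝ)
    (hfin : ∫⁻ y in Ioc (-a) a, Φ y ≠ ∞) : ∫⁻ y in Ioc (-a) a, Φ y = 0 := by
  rcases lt_or_ge a 0 with ha | ha
  · rw [Ioc_eq_empty (by linarith), Measure.restrict_empty, lintegral_zero_measure]
  have hc0 : 0 < c := zero_lt_one.trans hc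
  set r : ℕ → ℝ := fun n => a * c⁻¹ ^ n
  set μ := volume.withDensity Φ
  have hr : Antitone r := fun m n hmn =>
    mul_le_mul_of_nonneg_left (pow_le_pow_of_le_one (by positivity)
      (inv_le_one_of_one_le₀ hc.le) hmn) ha
  have hr0 : Tendsto r atTop (nhds 0) := by
    simpa [r] using (tendsto_pow_atTop_nhds_zero_of_lt_one (by positivity)
      (inv_lt_one_of_one_lt₀ hc)).const_mul a
  have hanti : Antitone fun n => Ioc (-r n) (r n) := fun m n hmn =>
    Ioc_subset_Ioc (neg_le_neg (hr hmn)) (hr hmn)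
  have hmono : Monotone fun n => μ (Ioc (-r n) (r n)) := by
    refine monotone_nat_of_le_succ fun n => ?_
    have hdiv : ∀ x : ℝ, x * c⁻¹ ^ (n + 1) = x * c⁻¹ ^ n / c := fun x => by
      rw [pow_succ]; field_simp
    simp only [μ, withDensity_apply _ measurableSet_Ioc, r, hdiv, ← neg_div]
    exact setLIntegral_Ioc_le_div_of_dilation hc0 hΦ _ _
  have hinter : ⋂ n, Ioc (-r n) (r n) ⊆ {0} := by
    intro x hx
    simp only [mem_iInter, mem_Ioc] at hx
    have : |x| ≤ 0 := ge_of_tendsto' hr0 fun n => abs_le.2 ⟨(hx n).1.le, (hx n).2⟩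
    simpa using abs_nonpos_iff.1 this
  have hμ : ∀ s, MeasurableSet s → μ s = ∫⁻ y in s, Φ y := fun s hs => withDensity_apply _ hs
  have h0 : μ (⋂ n, Ioc (-r n) (r n)) = 0 :=
    measure_mono_null hinter (withDensity_absolutelyContinuous _ _ (measure_singleton 0))
  have hfin' : μ (Ioc (-r 0) (r 0)) ≠ ∞ := by simpa [hμ _ measurableSet_Ioc, r] using hfin
  have : μ (Ioc (-r 0) (r 0)) ≤ 0 := by
    rw [← h0, hanti.measure_iInter (fun _ => measurableSet_Ioc.nullMeasurableSet) ⟨0, hfin'⟩]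
    exact le_iInf fun n => hmono (Nat.zero_le n)
  simpa [hμ _ measurableSet_Ioc, r] using this

end Doubling

namespace Function.Periodic

variable {T : ℝ}

theorem setLIntegral_Ioc_add_eq {φ : ℝ → ℝ≥0∞} (hφ : Periodic φ T) (hT : 0 < T) (t s : ℝ) :
    ∫⁻ x in Ioc t (t + T), φ x = ∫⁻ x in Ioc s (s + T), φ x := by
  refine (isAddFundamentalDomain_Ioc hT t).setLIntegral_eq (isAddFundamentalDomain_Ioc hT s) φ ?_
  rintro ⟨_, n, rfl⟩ x
  simpa [add_comm] using (hφ.zsmul n) x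

theorem setLIntegral_Ioc_comp_add_right {φ : ℝ → ℝ≥0∞} (hφ : Periodic φ T) (hT : 0 < T)
    (t s : ℝ) : ∫⁻ x in Ioc t (t + T), φ (x + s) = ∫⁻ x in Ioc t (t + T), φ x := by
  rw [(measurePreserving_add_right volume s).setLIntegral_comp_emb
    (measurableEmbedding_addRight s), image_add_const_Ioc, add_right_comm,
    hφ.setLIntegral_Ioc_add_eq hT]

theorem ae_of_ae_restrict_Ioc {β : Type*} {g : ℝ → β} (hg : Periodic g T) (hT : 0 < T)
    {p : β → Prop} {t : ℝ} (h : ∀ᵐ x ∂volume.restrict (Ioc t (t + T)), p (g x)) :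
    ∀ᵐ x, p (g x) := by
  refine (isAddFundamentalDomain_Ioc hT t).measure_zero_of_invariant _ ?_ ?_
  · rintro ⟨_, n, rfl⟩
    ext x
    simp only [mem_vadd_set, vadd_eq_add, AddSubgroup.mk_vadd, zsmul_eq_mul,
      mem_compl_iff, mem_ofPred_eq]
    constructor
    · rintro ⟨y, hy, rfl⟩
      rwa [add_comm, hg.int_mul n y]
    · exact fun hx => ⟨x - n * T, by rwa [(hg.int_mul n).sub_eq], by ring⟩
  · rw [ae_restrict_iff' measurableSet_Ioc, ae_iff] at h
    convert h using 2
    ext x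
    simp only [mem_inter_iff, mem_compl_iff, mem_ofPred_eq, mem_Ioc]
    tauto

end Function.Periodic

section ZeroOne

variable {a b c : ℝ}

theorem sq_abs_sub_le_of_zero_or_one (ha : a = 0 ∨ a = 1) (hb : b = 0 ∨ b = 1)
    (hc : c = 0 ∨ c = 1) : |a - c| ^ 2 ≤ |a - b| ^ 2 + |b - c| ^ 2 := by
  rcases ha with rfl | rfl <;> rcases hb with rfl | rfl <;> rcases hc with rfl | rfl <;> norm_num

theorem mul_one_sub_le_sq_abs_sub_of_zero_or_one (ha : a = 0 ∨ a = 1) (hb : b = 0 ∨ b = 1) :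
    a * (1 - b) ≤ |a - b| ^ 2 := by
  rcases ha with rfl | rfl <;> rcases hb with rfl | rfl <;> norm_num

end ZeroOne

noncomputable def shiftEnergy (g : ℝ → ℝ) (y : ℝ) : ℝ≥0∞ :=
  ∫⁻ x in Ioc 0 1, ENNReal.ofReal (|g (x + y) - g x| ^ 2)

section ShiftEnergy

variable {g : ℝ → ℝ}

theorem measurable_shiftEnergy (hg : Measurable g) : Measurable (shiftEnergy g) :=
  Measurable.lintegral_prod_right'
    (f := fun p : ℝ × ℝ => ENNReal.ofReal (|g (p.2 + p.1) - g p.2| ^ 2)) (by fun_prop)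

theorem periodic_shiftEnergy (hper : Periodic g 1) : Periodic (shiftEnergy g) 1 := fun _ =>
  lintegral_congr fun _ => by rw [← add_assoc, hper]

theorem periodic_ofReal_sq_abs_sub_comp_add (hper : Periodic g 1) (y : ℝ) :
    Periodic (fun x => ENNReal.ofReal (|g (x + y) - g x| ^ 2)) 1 := fun x => by
  simp only [add_right_comm x 1]
  rw [hper, hper]

@[simp]
theorem shiftEnergy_zero : shiftEnergy g 0 = 0 := by
  simp [shiftEnergy]

theorem ae_zero_or_one_comp_add_right (hval : ∀ᵐ x, g x = 0 ∨ g x = 1) (c : ℝ) :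
    ∀ᵐ x, g (x + c) = 0 ∨ g (x + c) = 1 :=
  (measurePreserving_add_right volume c).quasiMeasurePreserving.ae hval

theorem shiftEnergy_add_le (hmeas : Measurable g) (hper : Periodic g 1)
    (hval : ∀ᵐ x, g x = 0 ∨ g x = 1) (y z : ℝ) :
    shiftEnergy g (y + z) ≤ shiftEnergy g y + shiftEnergy g z := by
  have hpoint : ∀ᵐ x, ENNReal.ofReal (|g (x + (y + z)) - g x| ^ 2)
      ≤ ENNReal.ofReal (|g (x + z + y) - g (x + z)| ^ 2)
        + ENNReal.ofReal (|g (x + z) - g x| ^ 2) := by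
    filter_upwards [hval, ae_zero_or_one_comp_add_right hval z,
      ae_zero_or_one_comp_add_right hval (z + y)] with x h0 hz hzy
    rw [← add_assoc, add_right_comm, ← ENNReal.ofReal_add (by positivity) (by positivity)]
    rw [← add_assoc] at hzy
    exact ENNReal.ofReal_le_ofReal (sq_abs_sub_le_of_zero_or_one hzy hz h0)
  have hshift : ∫⁻ x in Ioc 0 1, ENNReal.ofReal (|g (x + z + y) - g (x + z)| ^ 2)
      = shiftEnergy g y := by
    simpa [shiftEnergy] using
      (periodic_ofReal_sq_abs_sub_comp_add hper y).setLIntegral_Ioc_comp_add_right one_pos 0 z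
  calc shiftEnergy g (y + z)
      ≤ ∫⁻ x in Ioc 0 1, (ENNReal.ofReal (|g (x + z + y) - g (x + z)| ^ 2)
          + ENNReal.ofReal (|g (x + z) - g x| ^ 2)) := lintegral_mono_ae (ae_restrict_of_ae hpoint)
    _ = shiftEnergy g y + shiftEnergy g z := by
      rw [lintegral_add_left (by fun_prop), hshift]; rfl

theorem lintegral_mul_lintegral_one_sub_le_lintegral_shiftEnergy (hmeas : Measurable g)
    (hper : Periodic g 1) (hval : ∀ᵐ x, g x = 0 ∨ g x = 1) :
    (∫⁻ x in Ioc 0 1, ENNReal.ofReal (g x)) * ∫⁻ x in Ioc 0 1, ENNReal.ofReal (1 - g x)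
      ≤ ∫⁻ y in Ioc 0 1, shiftEnergy g y := by
  have hinner (x : ℝ) : ∫⁻ y in Ioc 0 1, ENNReal.ofReal (g (x + y))
      = ∫⁻ y in Ioc 0 1, ENNReal.ofReal (g y) := by
    simp_rw [add_comm x]
    simpa using (hper.comp ENNReal.ofReal).setLIntegral_Ioc_comp_add_right one_pos 0 x
  calc (∫⁻ x in Ioc 0 1, ENNReal.ofReal (g x)) * ∫⁻ x in Ioc 0 1, ENNReal.ofReal (1 - g x)
      = ∫⁻ x in Ioc 0 1, ∫⁻ y in Ioc 0 1, ENNReal.ofReal (g (x + y)) * ENNReal.ofReal (1 - g x) := by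
        rw [← lintegral_const_mul _ (by fun_prop)]
        refine lintegral_congr fun x => ?_
        rw [lintegral_mul_const _ (by fun_prop), hinner]
    _ = ∫⁻ y in Ioc 0 1, ∫⁻ x in Ioc 0 1, ENNReal.ofReal (g (x + y)) * ENNReal.ofReal (1 - g x) :=
        lintegral_lintegral_swap (Measurable.aemeasurable (by fun_prop))
    _ ≤ ∫⁻ y in Ioc 0 1, shiftEnergy g y := by
        refine lintegral_mono fun y => lintegral_mono_ae (ae_restrict_of_ae ?_)
        filter_upwards [hval, ae_zero_or_one_comp_add_right hval y] with x hx hxy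
        have hg : 0 ≤ g (x + y) := by rcases hxy with h | h <;> simp [h]
        rw [← ENNReal.ofReal_mul hg]
        exact ENNReal.ofReal_le_ofReal (mul_one_sub_le_sq_abs_sub_of_zero_or_one hxy hx)

theorem lintegral_gagliardo_eq (hmeas : Measurable g) (hper : Periodic g 1) :
    ∫⁻ x in Ico (-(1:ℝ)/2) (1/2), ∫⁻ y in Ico (-(1:ℝ)/2) (1/2),
        ENNReal.ofReal (|g (x + y) - g x| ^ 2 / |y| ^ 2)
      = ∫⁻ y in Ioc (-(1/2)) (1/2), shiftEnergy g y * ENNReal.ofReal ((y ^ 2)⁻¹) := by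
  rw [lintegral_lintegral_swap (Measurable.aemeasurable (by fun_prop)),
    Measure.restrict_congr_set Ico_ae_eq_Ioc, neg_div]
  refine lintegral_congr fun y => ?_
  have hwindow : ∫⁻ x in Ioc (-(1/2)) (1/2), ENNReal.ofReal (|g (x + y) - g x| ^ 2)
      = shiftEnergy g y := by
    convert (periodic_ofReal_sq_abs_sub_comp_add hper y).setLIntegral_Ioc_add_eq one_pos
      (-(1/2)) 0 using 3 <;> norm_num [shiftEnergy]
  rw [← hwindow, ← lintegral_mul_const' _ _ ENNReal.ofReal_ne_top]
  refine lintegral_congr fun x => ?_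
  rw [div_eq_mul_inv, sq_abs y, ENNReal.ofReal_mul (by positivity)]

theorem setLIntegral_shiftEnergy_eq_zero (hmeas : Measurable g) (hper : Periodic g 1)
    (hval : ∀ᵐ x, g x = 0 ∨ g x = 1)
    (hfin : ∫⁻ y in Ioc (-(1/2)) (1/2), shiftEnergy g y * ENNReal.ofReal ((y ^ 2)⁻¹) ≠ ∞) :
    ∫⁻ y in Ioc 0 1, shiftEnergy g y = 0 := by
  set Φ : ℝ → ℝ≥0∞ := fun y => shiftEnergy g y * ENNReal.ofReal ((y ^ 2)⁻¹)
  have hdoubling (u : ℝ) : ENNReal.ofReal 2 * Φ (2 * u) ≤ Φ u := by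
    have hweight : ENNReal.ofReal (((2 * u) ^ 2)⁻¹)
        = ENNReal.ofReal 4⁻¹ * ENNReal.ofReal ((u ^ 2)⁻¹) := by
      rw [← ENNReal.ofReal_mul (by norm_num)]
      ring_nf
    have hsub : shiftEnergy g (2 * u) ≤ ENNReal.ofReal 2 * shiftEnergy g u := by
      rw [two_mul, ENNReal.ofReal_ofNat, two_mul]
      exact shiftEnergy_add_le hmeas hper hval u u
    calc ENNReal.ofReal 2 * Φ (2 * u)
        ≤ ENNReal.ofReal 2 * (ENNReal.ofReal 2 * shiftEnergy g u
            * (ENNReal.ofReal 4⁻¹ * ENNReal.ofReal ((u ^ 2)⁻¹))) := by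
          simp only [Φ, hweight]
          gcongr
      _ = ENNReal.ofReal (2 * 2 * 4⁻¹) * Φ u := by
          simp only [Φ, ENNReal.ofReal_mul zero_le_two,
            ENNReal.ofReal_mul (by norm_num : (0:ℝ) ≤ 2 * 2)]
          ring
      _ = Φ u := by norm_num
  have hΦ : ∫⁻ y in Ioc (-(1/2)) (1/2), Φ y = 0 :=
    setLIntegral_Ioc_neg_eq_zero_of_dilation one_lt_two hdoubling _ hfin
  have hΦ_eq_zero {y : ℝ} (hy : Φ y = 0) : shiftEnergy g y = 0 := by
    rcases mul_eq_zero.1 hy with h | h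
    · exact h
    · rw [ENNReal.ofReal_eq_zero, inv_nonpos] at h
      simp [pow_eq_zero_iff two_ne_zero |>.1 (le_antisymm h (sq_nonneg y))]
  have hΦmeas : Measurable Φ := (measurable_shiftEnergy hmeas).mul (by fun_prop)
  rw [lintegral_eq_zero_iff hΦmeas] at hΦ
  calc ∫⁻ y in Ioc 0 1, shiftEnergy g y = ∫⁻ y in Ioc (-(1/2)) (1/2), shiftEnergy g y := by
        convert (periodic_shiftEnergy hper).setLIntegral_Ioc_add_eq one_pos 0 (-(1/2)) using 3
          <;> norm_num
    _ = 0 := (lintegral_eq_zero_iff (measurable_shiftEnergy hmeas)).2 (hΦ.mono fun _ => hΦ_eq_zero)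

end ShiftEnergy

/-- If `g` is a 1-periodic measurable function on `ℝ` taking values in `{0,1}` a.e.,
and its `H^{1/2}` Gagliardo seminorm over the fundamental domain is finite, then
`g = 0` a.e. or `g = 1` a.e. -/
theorem stmt0 (g : ℝ → ℝ) (hmeas : Measurable g)
    (hper : ∀ x : ℝ, g (x + 1) = g x)
    (hval : ∀ᵐ x : ℝ, g x = 0 ∨ g x = 1)
    (hsob : (∫⁻ x in Set.Ico (-(1:ℝ)/2) (1/2), ∫⁻ y in Set.Ico (-(1:ℝ)/2) (1/2),
      ENNReal.ofReal (|g (x + y) - g x| ^ 2 / |y| ^ 2)) < ⊤) :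
    (∀ᵐ x : ℝ, g x = 0) ∨ (∀ᵐ x : ℝ, g x = 1) := by
  have hshift : ∫⁻ y in Ioc 0 1, shiftEnergy g y = 0 :=
    setLIntegral_shiftEnergy_eq_zero hmeas hper hval (lintegral_gagliardo_eq hmeas hper ▸ hsob.ne)
  have hprod := lintegral_mul_lintegral_one_sub_le_lintegral_shiftEnergy hmeas hper hval
  rw [hshift, nonpos_iff_eq_zero, mul_eq_zero, lintegral_eq_zero_iff (by fun_prop),
    lintegral_eq_zero_iff (by fun_prop)] at hprod
  have hval01 := ae_restrict_of_ae (μ := volume) (s := Ioc (0 : ℝ) (0 + 1)) hval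
  refine hprod.imp (fun h => ?_) (fun h => ?_)
  · refine Periodic.ae_of_ae_restrict_Ioc (p := (· = 0)) hper one_pos (t := 0) ?_
    filter_upwards [zero_add (1 : ℝ) ▸ h, hval01] with x hx h01
    rcases h01 with h01 | h01 <;> simp_all
  · refine Periodic.ae_of_ae_restrict_Ioc (p := (· = 1)) hper one_pos (t := 0) ?_
    filter_upwards [zero_add (1 : ℝ) ▸ h, hval01] with x hx h01
    rcases h01 with h01 | h01 <;> simp_all
end

section
/- Let S ⊆ [-1/2,1/2) be measurable with 0 < |S| < 1 (Lebesgue measure), and let g be the 1-periodic extension of the indicator function of S to ℝ. Then ∫_{-1/2}^{1/2} ∫_{-1/2}^{1/2} |g(x+y)-g(x)|²/|y|² dx dy = ∞. -/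
open MeasureTheory Set
open scoped ENNReal symmDiff

/-!
Let `T` be the `1`-periodic extension of `S`, `D y` the set where `T` and its translate by `y`
differ, and `φ y = |D y ∩ I|`. By Tonelli the double integral equals `∫_I φ(y) / y² dy`.
Translations preserve the measure of periodic sets within a period, and
`D (u + v) ⊆ (D u - v) ∪ D v`, so `φ` is subadditive; by Tonelli again its mean over a period
is at least `min (|S|, 1 - |S|) > 0`. Tiling `[0, 1)` by about `1/y` intervals of length `y`,
subadditivity gives `y ∫₀¹ φ ≤ 2 (∫₀^y φ + φ y) ≤ 2 (y² M + φ y)` with `M = ∫₀^ε φ(t) / t² dt`.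
Dividing by `y²` and integrating over `(0, ε)`, finiteness of `M` would make `∫₀^ε dy / y`
finite.
-/

lemma lintegral_Ioo_inv_eq_top {ε : ℝ} (hε : 0 < ε) :
    ∫⁻ y in Ioo 0 ε, ENNReal.ofReal y⁻¹ = ⊤ := by
  refine not_ne_iff.1 fun h => ?_
  rw [lintegral_ofReal_ne_top_iff_integrable (by fun_prop)
    ((ae_restrict_iff' measurableSet_Ioo).2 (.of_forall fun y hy => inv_nonneg.2 hy.1.le))] at h
  have := (intervalIntegrable_iff_integrableOn_Ioo_of_le hε.le).2 h
  simp [hε.ne] at this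

lemma setLIntegral_Ico_add (f : ℝ → ℝ≥0∞) (a y : ℝ) :
    ∫⁻ t in Ico a (a + y), f t = ∫⁻ s in Ico 0 y, f (s + a) := by
  rw [← (measurePreserving_add_right volume a).setLIntegral_comp_preimage_emb
    (measurableEmbedding_addRight a)]
  congr 2
  ext s
  simp only [mem_preimage, mem_Ico]
  constructor <;> rintro ⟨h1, h2⟩ <;> constructor <;> linarith

section Subadditive

variable {f : ℝ → ℝ≥0∞}

lemma le_add_natCast_mul_of_subadditive (hf : ∀ u v, f (u + v) ≤ f u + f v) (n : ℕ) (s y : ℝ) :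
    f (s + n * y) ≤ f s + n * f y := by
  induction n with
  | zero => simp
  | succ n ih =>
    calc f (s + (n + 1 : ℕ) * y) = f ((s + n * y) + y) := by push_cast; ring_nf
      _ ≤ f s + n * f y + f y := (hf _ _).trans (add_le_add_left ih _)
      _ = f s + (n + 1 : ℕ) * f y := by push_cast; ring

lemma ofReal_mul_lintegral_Ico_le_of_subadditive (hf : ∀ u v, f (u + v) ≤ f u + f v) {y : ℝ}
    (hy : 0 < y) (hy1 : y ≤ 1) :
    ENNReal.ofReal y * ∫⁻ t in Ico 0 1, f t ≤ 2 * ((∫⁻ t in Ico 0 y, f t) + f y) := by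
  set N := ⌊y⁻¹⌋₊
  have hcover : Ico (0 : ℝ) 1 ⊆ ⋃ q : Fin (N + 1), Ico (q * y) (q * y + y) := by
    intro t ⟨ht0, ht1⟩
    have hq : ⌊t / y⌋₊ < N + 1 := Nat.lt_succ_of_le (Nat.floor_le_floor (by
      rw [div_eq_mul_inv]; exact mul_le_of_le_one_left (inv_nonneg.2 hy.le) ht1.le))
    refine mem_iUnion.2 ⟨⟨_, hq⟩, ?_, ?_⟩
    · exact (le_div_iff₀ hy).1 (Nat.floor_le (div_nonneg ht0 hy.le))
    · have := Nat.lt_floor_add_one (t / y)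
      rw [div_lt_iff₀ hy] at this
      simpa [add_mul] using this
  have hpiece : ∀ q : Fin (N + 1), ∫⁻ t in Ico (q * y) (q * y + y), f t
      ≤ (∫⁻ t in Ico 0 y, f t) + f y := by
    intro q
    have hqy : (q : ℝ) * y ≤ 1 := by
      rw [← le_div_iff₀ hy, div_eq_mul_inv, one_mul]
      exact Nat.le_floor_iff (inv_nonneg.2 hy.le) |>.1 (Nat.lt_succ_iff.1 q.2)
    calc ∫⁻ t in Ico (q * y) (q * y + y), f t = ∫⁻ s in Ico 0 y, f (s + q * y) :=
          setLIntegral_Ico_add f _ _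
      _ ≤ ∫⁻ s in Ico 0 y, (f s + q * f y) :=
          lintegral_mono fun s => le_add_natCast_mul_of_subadditive hf q s y
      _ = (∫⁻ t in Ico 0 y, f t) + ENNReal.ofReal (q * y) * f y := by
          rw [lintegral_add_right _ measurable_const, setLIntegral_const, Real.volume_Ico,
            sub_zero, ENNReal.ofReal_mul (Nat.cast_nonneg _), ENNReal.ofReal_natCast]
          ring
      _ ≤ (∫⁻ t in Ico 0 y, f t) + f y := by
          gcongr
          exact mul_le_of_le_one_left' (ENNReal.ofReal_le_one.2 hqy)
  have hN : ENNReal.ofReal y * (N + 1 : ℕ) ≤ 2 := by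
    rw [← ENNReal.ofReal_natCast, ← ENNReal.ofReal_mul hy.le, ← ENNReal.ofReal_ofNat 2]
    apply ENNReal.ofReal_le_ofReal
    have hNy : (N : ℝ) ≤ y⁻¹ := Nat.floor_le (inv_nonneg.2 hy.le)
    push_cast
    calc y * (N + 1) ≤ y * (y⁻¹ + y⁻¹) := by gcongr; exact (one_le_inv₀ hy).2 hy1
      _ = 2 := by field_simp; ring
  calc ENNReal.ofReal y * ∫⁻ t in Ico 0 1, f t
      ≤ ENNReal.ofReal y * ∑' q : Fin (N + 1), ∫⁻ t in Ico (q * y) (q * y + y), f t := by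
        gcongr
        exact (lintegral_mono_set hcover).trans (lintegral_iUnion_le _ _)
    _ ≤ ENNReal.ofReal y * ∑' _q : Fin (N + 1), ((∫⁻ t in Ico 0 y, f t) + f y) := by
        gcongr with q
        exact hpiece q
    _ ≤ 2 * ((∫⁻ t in Ico 0 y, f t) + f y) := by
        rw [tsum_fintype, Finset.sum_const, Finset.card_univ, Fintype.card_fin, nsmul_eq_mul,
          ← mul_assoc]
        gcongr

lemma ofReal_inv_sq_mul_lintegral_Ico_le (y : ℝ) :
    ENNReal.ofReal (y ^ 2)⁻¹ * ∫⁻ t in Ico 0 y, f t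
      ≤ ∫⁻ t in Ioo 0 y, ENNReal.ofReal (t ^ 2)⁻¹ * f t := by
  rw [← lintegral_const_mul' _ _ ENNReal.ofReal_ne_top,
    ← Measure.restrict_congr_set Ioo_ae_eq_Ico]
  refine setLIntegral_mono' measurableSet_Ioo fun t ht => ?_
  gcongr ENNReal.ofReal ?_ * _
  exact inv_anti₀ (pow_pos ht.1 2) (pow_le_pow_left₀ ht.1.le ht.2.le 2)

theorem lintegral_inv_sq_mul_eq_top_of_subadditive (hf : ∀ u v, f (u + v) ≤ f u + f v)
    (h0 : ∫⁻ t in Ico 0 1, f t ≠ 0) {δ : ℝ} (hδ : 0 < δ) :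
    ∫⁻ y in Ioo 0 δ, ENNReal.ofReal (y ^ 2)⁻¹ * f y = ⊤ := by
  set ε := min δ 1
  have hε : 0 < ε := lt_min hδ one_pos
  set M := ∫⁻ y in Ioo 0 ε, ENNReal.ofReal (y ^ 2)⁻¹ * f y
  suffices hM : M = ⊤ from
    top_le_iff.1 (hM ▸ lintegral_mono_set (Ioo_subset_Ioo_right (min_le_left _ _)))
  refine not_ne_iff.1 fun hM => ?_
  have hpt : ∀ y ∈ Ioo 0 ε, ENNReal.ofReal y⁻¹ * ∫⁻ t in Ico 0 1, f t
      ≤ 2 * (M + ENNReal.ofReal (y ^ 2)⁻¹ * f y) := by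
    intro y ⟨hy, hyε⟩
    calc ENNReal.ofReal y⁻¹ * ∫⁻ t in Ico 0 1, f t
        = ENNReal.ofReal (y ^ 2)⁻¹ * (ENNReal.ofReal y * ∫⁻ t in Ico 0 1, f t) := by
          rw [← mul_assoc, ← ENNReal.ofReal_mul (by positivity)]
          congr 2
          field_simp
      _ ≤ ENNReal.ofReal (y ^ 2)⁻¹ * (2 * ((∫⁻ t in Ico 0 y, f t) + f y)) := by
          gcongr _ * ?_
          exact ofReal_mul_lintegral_Ico_le_of_subadditive hf hy (hyε.le.trans (min_le_right _ _))
      _ = 2 * (ENNReal.ofReal (y ^ 2)⁻¹ * (∫⁻ t in Ico 0 y, f t)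
            + ENNReal.ofReal (y ^ 2)⁻¹ * f y) := by ring
      _ ≤ 2 * (M + ENNReal.ofReal (y ^ 2)⁻¹ * f y) := by
          gcongr 2 * (?_ + _)
          exact (ofReal_inv_sq_mul_lintegral_Ico_le y).trans
            (lintegral_mono_set (Ioo_subset_Ioo_right hyε.le))
  have : ⊤ ≤ 2 * (M * ENNReal.ofReal ε + M) :=
    calc ⊤ = ∫⁻ y in Ioo 0 ε, ENNReal.ofReal y⁻¹ * ∫⁻ t in Ico 0 1, f t := by
          rw [lintegral_mul_const _ (by fun_prop), lintegral_Ioo_inv_eq_top hε, ENNReal.top_mul h0]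
      _ ≤ ∫⁻ y in Ioo 0 ε, 2 * (M + ENNReal.ofReal (y ^ 2)⁻¹ * f y) :=
          setLIntegral_mono' measurableSet_Ioo hpt
      _ = 2 * (M * ENNReal.ofReal ε + M) := by
          rw [lintegral_const_mul' _ _ (by simp), lintegral_add_left measurable_const,
            setLIntegral_const, Real.volume_Ioo, sub_zero]
  exact (by finiteness : 2 * (M * ENNReal.ofReal ε + M) ≠ ⊤) (top_le_iff.1 this)

end Subadditive

section PeriodicSet

variable {A : Set ℝ}

lemma volume_inter_Ico_eq_of_periodic (hm : MeasurableSet A) (hA : ∀ x, x + 1 ∈ A ↔ x ∈ A)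
    (a b : ℝ) : volume (A ∩ Ico a (a + 1)) = volume (A ∩ Ico b (b + 1)) := by
  have hper : Function.Periodic (· ∈ A) 1 := fun x => propext (hA x)
  rw [measure_congr (ae_eq_set_inter (ae_eq_refl A) Ico_ae_eq_Ioc),
    measure_congr (ae_eq_set_inter (ae_eq_refl A) Ico_ae_eq_Ioc)]
  refine (isAddFundamentalDomain_Ioc one_pos a).measure_set_eq
    (isAddFundamentalDomain_Ioc one_pos b) hm fun ⟨_, n, rfl⟩ => ?_
  ext x
  simpa [add_comm x] using hper.int_mul n x

lemma volume_preimage_add_inter_Ico (hm : MeasurableSet A) (hA : ∀ x, x + 1 ∈ A ↔ x ∈ A)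
    (z a b : ℝ) : volume ((· + z) ⁻¹' A ∩ Ico a (a + 1)) = volume (A ∩ Ico b (b + 1)) := by
  calc volume ((· + z) ⁻¹' A ∩ Ico a (a + 1))
      = volume ((· + z) ⁻¹' (A ∩ Ico (a + z) (a + z + 1))) := by
        congr 1
        ext x
        simp only [mem_inter_iff, mem_preimage, mem_Ico]
        constructor <;> rintro ⟨h, h1, h2⟩ <;> refine ⟨h, ?_, ?_⟩ <;> linarith
    _ = volume (A ∩ Ico b (b + 1)) := by
        rw [measure_preimage_add_right, volume_inter_Ico_eq_of_periodic hm hA]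

end PeriodicSet

def shiftSymmDiff (A : Set ℝ) (y : ℝ) : Set ℝ := ((· + y) ⁻¹' A) ∆ A

section ShiftSymmDiff

variable {A : Set ℝ}

lemma mem_shiftSymmDiff {y x : ℝ} : x ∈ shiftSymmDiff A y ↔ ¬(x + y ∈ A ↔ x ∈ A) := by
  simp only [shiftSymmDiff, mem_symmDiff, mem_preimage]
  tauto

lemma measurableSet_shiftSymmDiff (hm : MeasurableSet A) (y : ℝ) :
    MeasurableSet (shiftSymmDiff A y) :=
  (measurable_add_const y hm).symmDiff hm

lemma shiftSymmDiff_periodic (hA : ∀ x, x + 1 ∈ A ↔ x ∈ A) (y x : ℝ) :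
    x + 1 ∈ shiftSymmDiff A y ↔ x ∈ shiftSymmDiff A y := by
  rw [mem_shiftSymmDiff, mem_shiftSymmDiff, add_right_comm, hA, hA]

lemma volume_shiftSymmDiff_add_le (hm : MeasurableSet A) (hA : ∀ x, x + 1 ∈ A ↔ x ∈ A)
    (a u v : ℝ) :
    volume (shiftSymmDiff A (u + v) ∩ Ico a (a + 1))
      ≤ volume (shiftSymmDiff A u ∩ Ico a (a + 1))
        + volume (shiftSymmDiff A v ∩ Ico a (a + 1)) := by
  have hsub : shiftSymmDiff A (u + v) ∩ Ico a (a + 1)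
      ⊆ ((· + v) ⁻¹' shiftSymmDiff A u ∩ Ico a (a + 1))
        ∪ (shiftSymmDiff A v ∩ Ico a (a + 1)) := by
    rintro x ⟨hx, hxI⟩
    simp only [mem_union, mem_inter_iff, mem_preimage, mem_shiftSymmDiff, add_assoc,
      add_comm v u] at hx ⊢
    tauto
  calc _ ≤ _ := measure_mono hsub
    _ ≤ _ := measure_union_le _ _
    _ = _ := by
      rw [volume_preimage_add_inter_Ico (measurableSet_shiftSymmDiff hm u)
        (shiftSymmDiff_periodic hA u)]

lemma min_volume_le_lintegral_volume_shiftSymmDiff (hm : MeasurableSet A)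
    (hA : ∀ x, x + 1 ∈ A ↔ x ∈ A) (a : ℝ) :
    min (volume (A ∩ Ico a (a + 1))) (volume (Aᶜ ∩ Ico a (a + 1)))
      ≤ ∫⁻ y in Ico 0 1, volume (shiftSymmDiff A y ∩ Ico a (a + 1)) := by
  set I := Ico a (a + 1)
  have hmeas : Measurable
      (Function.uncurry fun x y => (shiftSymmDiff A y).indicator (1 : ℝ → ℝ≥0∞) x) := by
    have hE : MeasurableSet {p : ℝ × ℝ | p.1 ∈ shiftSymmDiff A p.2} :=
      ((measurable_fst.add measurable_snd) hm).symmDiff (measurable_fst hm)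
    exact measurable_one.indicator hE
  have hinner : ∀ x, min (volume (A ∩ I)) (volume (Aᶜ ∩ I))
      ≤ ∫⁻ y in Ico 0 1, (shiftSymmDiff A y).indicator 1 x := by
    intro x
    have hfib : ∀ B : Set ℝ, MeasurableSet B → (∀ x, x + 1 ∈ B ↔ x ∈ B) →
        (∀ y, x ∈ shiftSymmDiff A y ↔ y + x ∈ B) →
        ∫⁻ y in Ico 0 1, (shiftSymmDiff A y).indicator 1 x = volume (B ∩ I) := by
      intro B hBm hB hxB
      have hfun : ∀ y, (shiftSymmDiff A y).indicator (1 : ℝ → ℝ≥0∞) x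
          = ((· + x) ⁻¹' B).indicator 1 y := fun y => by
        classical
        simp only [indicator_apply, hxB, mem_preimage, Pi.one_apply]
      rw [lintegral_congr hfun, lintegral_indicator_one (measurable_add_const x hBm),
        Measure.restrict_apply' measurableSet_Ico, ← zero_add (1 : ℝ),
        volume_preimage_add_inter_Ico hBm hB]
    by_cases hx : x ∈ A
    · rw [hfib Aᶜ hm.compl (fun x => not_congr (hA x)) fun y => by
        simp [mem_shiftSymmDiff, add_comm y, hx]]
      exact min_le_right _ _
    · rw [hfib A hm hA fun y => by simp [mem_shiftSymmDiff, add_comm y, hx]]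
      exact min_le_left _ _
  calc min (volume (A ∩ I)) (volume (Aᶜ ∩ I))
      = ∫⁻ _ in I, min (volume (A ∩ I)) (volume (Aᶜ ∩ I)) := by simp [I]
    _ ≤ ∫⁻ x in I, ∫⁻ y in Ico 0 1, (shiftSymmDiff A y).indicator 1 x := lintegral_mono hinner
    _ = ∫⁻ y in Ico 0 1, volume (shiftSymmDiff A y ∩ I) := by
      rw [lintegral_lintegral_swap hmeas.aemeasurable]
      refine lintegral_congr fun y => ?_
      rw [lintegral_indicator_one (measurableSet_shiftSymmDiff hm y),
        Measure.restrict_apply (measurableSet_shiftSymmDiff hm y)]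

end ShiftSymmDiff

lemma lintegral_lintegral_indicator_sub_sq_div_sq {A : Set ℝ} (hm : MeasurableSet A)
    (s t : Set ℝ) :
    ∫⁻ x in s, ∫⁻ y in t,
        ENNReal.ofReal (|A.indicator 1 (x + y) - A.indicator 1 x| ^ 2 / |y| ^ 2)
      = ∫⁻ y in t, ENNReal.ofReal (y ^ 2)⁻¹ * volume (shiftSymmDiff A y ∩ s) := by
  have hpt : ∀ x y, ENNReal.ofReal (|A.indicator 1 (x + y) - A.indicator 1 x| ^ 2 / |y| ^ 2)
      = (shiftSymmDiff A y).indicator (fun _ => ENNReal.ofReal (y ^ 2)⁻¹) x := by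
    intro x y
    by_cases h1 : x + y ∈ A <;> by_cases h2 : x ∈ A <;>
      simp [indicator_of_mem, indicator_of_notMem, mem_shiftSymmDiff, h1, h2]
  have hmeas : Measurable (Function.uncurry fun x y : ℝ =>
      ENNReal.ofReal (|A.indicator 1 (x + y) - A.indicator 1 x| ^ 2 / |y| ^ 2)) := by
    have := (measurable_one : Measurable (1 : ℝ → ℝ)).indicator hm
    fun_prop
  rw [lintegral_lintegral_swap hmeas.aemeasurable]
  refine lintegral_congr fun y => ?_
  simp_rw [hpt]
  rw [lintegral_indicator_const (measurableSet_shiftSymmDiff hm y),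
    Measure.restrict_apply (measurableSet_shiftSymmDiff hm y)]

lemma preimage_fract_inter_Ico {S : Set ℝ} (hsub : S ⊆ Ico (-(1:ℝ)/2) (1/2)) :
    (fun x => Int.fract (x + 1/2) - 1/2) ⁻¹' S ∩ Ico (-(1:ℝ)/2) (1/2) = S := by
  have hfract : ∀ x ∈ Ico (-(1:ℝ)/2) (1/2), Int.fract (x + 1/2) - 1/2 = x :=
    fun x ⟨h1, h2⟩ => by
      rw [Int.fract_eq_self.2 ⟨by linarith, by linarith⟩]
      ring
  ext x
  simp only [mem_inter_iff, mem_preimage]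
  constructor
  · rintro ⟨hx, hxI⟩
    rwa [hfract x hxI] at hx
  · intro hx
    exact ⟨by rwa [hfract x (hsub hx)], hsub hx⟩

/-- For `S ⊆ [-1/2,1/2)` with `0 < |S| < 1`, the 1-periodic extension `g` of the indicator
of `S` has infinite `H^{1/2}` Gagliardo seminorm over the fundamental domain. -/
theorem stmt1 (S : Set ℝ) (hS : MeasurableSet S) (hsub : S ⊆ Set.Ico (-(1:ℝ)/2) (1/2))
    (h0 : 0 < volume S) (h1 : volume S < 1)
    (g : ℝ → ℝ)
    (hg : ∀ x : ℝ, g x = S.indicator 1 (Int.fract (x + 1/2) - 1/2)) :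
    (∫⁻ x in Set.Ico (-(1:ℝ)/2) (1/2), ∫⁻ y in Set.Ico (-(1:ℝ)/2) (1/2),
      ENNReal.ofReal (|g (x + y) - g x| ^ 2 / |y| ^ 2)) = ⊤ := by
  set T := (fun x : ℝ => Int.fract (x + 1/2) - 1/2) ⁻¹' S
  have hTm : MeasurableSet T :=
    (by fun_prop : Measurable fun x : ℝ => Int.fract (x + 1/2) - 1/2) hS
  have hTper : ∀ x, x + 1 ∈ T ↔ x ∈ T := fun x => by
    simp only [T, mem_preimage, add_right_comm x 1, Int.fract_add_one]
  have hI : Ico (-(1:ℝ)/2) (1/2) = Ico (-1/2) (-1/2 + 1) := by norm_num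
  have hg' : g = T.indicator 1 := funext fun x => hg x
  rw [hg', lintegral_lintegral_indicator_sub_sq_div_sq hTm, hI]
  have hmin :
      0 < min (volume (T ∩ Ico (-1/2) (-1/2 + 1))) (volume (Tᶜ ∩ Ico (-1/2) (-1/2 + 1))) := by
    rw [← hI, ← sdiff_eq_compl_inter, ← sdiff_inter_self_eq_sdiff, preimage_fract_inter_Ico hsub,
      measure_sdiff hsub hS.nullMeasurableSet h1.ne_top, Real.volume_Ico]
    exact lt_min h0 (by norm_num [h1])
  have htop := lintegral_inv_sq_mul_eq_top_of_subadditive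
    (volume_shiftSymmDiff_add_le hTm hTper _)
    (hmin.trans_le (min_volume_le_lintegral_volume_shiftSymmDiff hTm hTper _)).ne'
    (by norm_num : (0:ℝ) < 1/2)
  refine top_le_iff.1 (htop ▸ lintegral_mono_set fun y hy => ?_)
  exact ⟨by linarith [hy.1], by linarith [hy.2]⟩
end

section
/- Let g be a 1-periodic measurable function on ℝ such that the limit lim_{|I|→0} (1/|I|²) ∫_I ∫_I |g(x)-g(y)| dx dy = 0 holds uniformly over intervals I ⊆ [-1/2,1/2). If g takes values in {0,1} almost everywhere, then g = 0 a.e. or g = 1 a.e. on [-1/2,1/2). -/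
/-!
If `g` is neither a.e. `0` nor a.e. `1` on `[-1/2, 1/2)`, both level sets `{g = 1}` and `{g = 0}`
have Lebesgue density points there, so for every small `r` some interval of length `r` carries
mean of `g` above `3/4` and another one below `1/4`. Sliding the first interval to the second,
the mean passes through `1/2`. For a `{0,1}`-valued function with mean `m` on an interval of
length `L` the double integral of `|g x - g y|` equals `2 m (L - m)`, so on that interval the
normalized oscillation is `1/2`, which the oscillation condition forbids once `r` is small.
-/

open MeasureTheory Set Filter Metric Topology

section ZeroOne

variable {α : Type*} [MeasurableSpace α] {μ : Measure α} {f : α → ℝ}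

theorem integral_eq_measureReal_of_ae_zero_or_one (hf : Measurable f)
    (hval : ∀ᵐ x ∂μ, f x = 0 ∨ f x = 1) : ∫ x, f x ∂μ = μ.real {x | f x = 1} := by
  rw [← integral_indicator_one (s := {x | f x = 1}) (hf (measurableSet_singleton 1))]
  refine integral_congr_ae ?_
  filter_upwards [hval] with x hx
  rcases hx with h | h <;> simp [h]

/-- For `{0,1}`-values, `|f x - f y| = f x * (1 - 2 * f y) + f y`. -/
theorem integral_integral_abs_sub_of_ae_zero_or_one [IsFiniteMeasure μ] (hf : Integrable f μ)
    (hval : ∀ᵐ x ∂μ, f x = 0 ∨ f x = 1) :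
    ∫ x, ∫ y, |f x - f y| ∂μ ∂μ = 2 * (∫ x, f x ∂μ) * (μ.real univ - ∫ x, f x ∂μ) := by
  set m := ∫ x, f x ∂μ
  have hinner : ∀ᵐ x ∂μ, ∫ y, |f x - f y| ∂μ = f x * (μ.real univ - 2 * m) + m := by
    filter_upwards [hval] with x hx
    have hpoint : (fun y => |f x - f y|) =ᵐ[μ] fun y => f x * (1 - 2 * f y) + f y := by
      filter_upwards [hval] with y hy
      rcases hx with h | h <;> rcases hy with h' | h' <;> norm_num [h, h']
    have hint : Integrable (fun y => f x * (1 - 2 * f y)) μ :=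
      ((integrable_const 1).sub (hf.const_mul 2)).const_mul (f x)
    rw [integral_congr_ae hpoint, integral_add hint hf, integral_const_mul,
      integral_sub (integrable_const 1) (hf.const_mul 2), integral_const_mul, integral_const,
      smul_eq_mul, mul_one]
  rw [integral_congr_ae hinner, integral_add (hf.mul_const _) (integrable_const m),
    integral_mul_const, integral_const, smul_eq_mul]
  ring

end ZeroOne

section IntervalZeroOne

variable {f : ℝ → ℝ} {a b : ℝ}

theorem intervalIntegrable_of_ae_zero_or_one (hf : Measurable f)
    (hval : ∀ᵐ x, f x = 0 ∨ f x = 1) (a b : ℝ) : IntervalIntegrable f volume a b :=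
  (intervalIntegrable_const (c := (1 : ℝ))).mono_fun' hf.aestronglyMeasurable <|
    ae_restrict_of_ae <| hval.mono fun x hx => by rcases hx with h | h <;> simp [h]

theorem intervalIntegral_eq_measureReal_of_ae_zero_or_one (hf : Measurable f)
    (hval : ∀ᵐ x, f x = 0 ∨ f x = 1) (hab : a ≤ b) :
    ∫ x in a..b, f x = volume.real ({x | f x = 1} ∩ Ioc a b) := by
  rw [intervalIntegral.integral_of_le hab,
    integral_eq_measureReal_of_ae_zero_or_one hf (ae_restrict_of_ae hval),
    measureReal_restrict_apply (t := {x | f x = 1}) (hf (measurableSet_singleton 1))]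

theorem intervalIntegral_eq_sub_measureReal_of_ae_zero_or_one (hf : Measurable f)
    (hval : ∀ᵐ x, f x = 0 ∨ f x = 1) (hab : a ≤ b) :
    ∫ x in a..b, f x = b - a - volume.real ({x | f x = 0} ∩ Ioc a b) := by
  have hval' : ∀ᵐ x, 1 - f x = 0 ∨ 1 - f x = 1 :=
    hval.mono fun x hx => by rcases hx with h | h <;> simp [h]
  have hcompl := intervalIntegral_eq_measureReal_of_ae_zero_or_one (hf.const_sub 1) hval' hab
  rw [intervalIntegral.integral_sub intervalIntegrable_const
    (intervalIntegrable_of_ae_zero_or_one hf hval a b), intervalIntegral.integral_const,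
    smul_eq_mul, mul_one] at hcompl
  simp only [sub_eq_self] at hcompl
  linarith

theorem intervalIntegral_integral_abs_sub_of_ae_zero_or_one
    (hf : IntervalIntegrable f volume a b) (hval : ∀ᵐ x, f x = 0 ∨ f x = 1) (hab : a ≤ b) :
    ∫ x in a..b, ∫ y in a..b, |f x - f y| =
      2 * (∫ x in a..b, f x) * (b - a - ∫ x in a..b, f x) := by
  simp only [intervalIntegral.integral_of_le hab]
  rw [integral_integral_abs_sub_of_ae_zero_or_one hf.1 (ae_restrict_of_ae hval),
    measureReal_restrict_apply_univ, Real.volume_real_Ioc_of_le hab]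

end IntervalZeroOne

theorem exists_intervalIntegral_add_eq {f : ℝ → ℝ}
    (hf : ∀ a b, IntervalIntegrable f volume a b) (r : ℝ) {a₀ a₁ y : ℝ}
    (hy : y ∈ uIcc (∫ x in a₀..a₀ + r, f x) (∫ x in a₁..a₁ + r, f x)) :
    ∃ c ∈ uIcc a₀ a₁, ∫ x in c..c + r, f x = y := by
  have hcont : Continuous fun a => ∫ x in a..a + r, f x := by
    have hprim := intervalIntegral.continuous_primitive hf 0
    convert (hprim.comp (continuous_add_const r)).sub hprim using 1
    funext a
    exact (intervalIntegral.integral_interval_sub_left (hf 0 _) (hf 0 _)).symm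
  exact intermediate_value_uIcc hcont.continuousOn hy

theorem exists_Ioc_subset_closedBall {u v x r : ℝ} (hx : x ∈ Ico u v) (hr : 0 ≤ r)
    (hruv : 2 * r < v - u) : ∃ a, u ≤ a ∧ a + r < v ∧ Ioc a (a + r) ⊆ closedBall x r := by
  rw [Real.closedBall_eq_Icc]
  by_cases h : x + r < v
  · exact ⟨x, hx.1, h, fun y hy => ⟨by linarith [hy.1], hy.2⟩⟩
  · exact ⟨x - r, by linarith, by linarith [hx.2], fun y hy => ⟨hy.1.le, by linarith [hy.2]⟩⟩

/-- At a density point `x` of `s ∩ Ico u v`, once the ball of radius `r` is filled to a fraction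
`(1 + θ) / 2`, its half of length `r` lying in `Ico u v` meets `s` in measure more than `θ r`. -/
theorem eventually_exists_Ioc_lt_measureReal_inter {s : Set ℝ} {u v θ : ℝ}
    (hs : MeasurableSet s) (hpos : volume (s ∩ Ico u v) ≠ 0) (hθ : θ < 1) :
    ∀ᶠ r in 𝓝[>] 0, ∃ a, u ≤ a ∧ a + r < v ∧ θ * r < volume.real (s ∩ Ioc a (a + r)) := by
  set t := s ∩ Ico u v
  have ht : MeasurableSet t := hs.inter measurableSet_Ico
  have : (ae (volume.restrict t)).NeBot := ae_neBot.2 (by rwa [Ne, Measure.restrict_eq_zero])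
  obtain ⟨x, hdens, hxt⟩ :=
    ((Besicovitch.ae_tendsto_measure_inter_div volume t).and (ae_restrict_mem ht)).exists
  have hdens' : Tendsto (fun r => volume.real (t ∩ closedBall x r) / volume.real (closedBall x r))
      (𝓝[>] 0) (𝓝 1) := by
    have h := (ENNReal.tendsto_toReal ENNReal.one_ne_top).comp hdens
    rw [ENNReal.toReal_one] at h
    exact h.congr fun r => ENNReal.toReal_div _ _
  filter_upwards [hdens'.eventually (lt_mem_nhds (show (1 + θ) / 2 < 1 by linarith)),
    Ioo_mem_nhdsGT (show (0 : ℝ) < (v - u) / 2 by linarith [hxt.2.1, hxt.2.2])]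
    with r hr ⟨hr0, hruv⟩
  obtain ⟨a, hua, hav, hsub⟩ := exists_Ioc_subset_closedBall hxt.2 hr0.le (by linarith)
  refine ⟨a, hua, hav, ?_⟩
  rw [Real.volume_real_closedBall hr0.le, lt_div_iff₀ (by positivity)] at hr
  have hcover : t ∩ closedBall x r ⊆ (s ∩ Ioc a (a + r)) ∪ (closedBall x r \ Ioc a (a + r)) :=
    fun y hy => (em (y ∈ Ioc a (a + r))).imp (fun h => ⟨hy.1.1, h⟩) (fun h => ⟨hy.2, h⟩)
  have hfin : volume ((s ∩ Ioc a (a + r)) ∪ (closedBall x r \ Ioc a (a + r))) ≠ ⊤ :=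
    ((measure_mono (union_subset (inter_subset_right.trans hsub) sdiff_subset)).trans_lt
      measure_closedBall_lt_top).ne
  have hsplit := (measureReal_mono hcover hfin).trans (measureReal_union_le _ _)
  rw [measureReal_sdiff hsub measurableSet_Ioc measure_closedBall_lt_top.ne,
    Real.volume_real_closedBall hr0.le, Real.volume_real_Ioc_of_le (by linarith)] at hsplit
  linarith

theorem measure_setOf_eq_inter_ne_zero {α β : Type*} [MeasurableSpace α] {μ : Measure α}
    {f : α → β} {s : Set α} (hs : MeasurableSet s) {c c' : β}
    (hval : ∀ᵐ x ∂μ, f x = c ∨ f x = c') (h : ¬ ∀ᵐ x ∂μ.restrict s, f x = c) :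
    μ ({x | f x = c'} ∩ s) ≠ 0 := by
  contrapose! h
  rw [← Measure.restrict_apply' hs] at h
  filter_upwards [ae_restrict_of_ae hval, measure_eq_zero_iff_ae_notMem.1 h] with x hx hx'
  exact hx.resolve_right hx'

theorem stmt2_general (g : ℝ → ℝ) (hmeas : Measurable g)
    (hval : ∀ᵐ x : ℝ, g x = 0 ∨ g x = 1)
    (hosc : ∀ ε : ℝ, 0 < ε → ∃ δ : ℝ, 0 < δ ∧ ∀ a b : ℝ, a < b →
      Set.Icc a b ⊆ Set.Ico (-(1:ℝ)/2) (1/2) → b - a < δ →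
      (1 / (b - a) ^ 2) * ∫ x in a..b, ∫ y in a..b, |g x - g y| ≤ ε) :
    (∀ᵐ x ∂(volume.restrict (Set.Ico (-(1:ℝ)/2) (1/2))), g x = 0) ∨
    (∀ᵐ x ∂(volume.restrict (Set.Ico (-(1:ℝ)/2) (1/2))), g x = 1) := by
  by_contra hne
  obtain ⟨hne₀, hne₁⟩ := not_or.1 hne
  have hint := intervalIntegrable_of_ae_zero_or_one hmeas hval
  obtain ⟨δ, hδ, hoscδ⟩ := hosc (1 / 4) (by norm_num)
  have hdense₁ := eventually_exists_Ioc_lt_measureReal_inter (s := {x | g x = 1}) (θ := 3 / 4)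
    (hmeas (measurableSet_singleton 1))
    (measure_setOf_eq_inter_ne_zero measurableSet_Ico hval hne₀) (by norm_num)
  have hdense₀ := eventually_exists_Ioc_lt_measureReal_inter (s := {x | g x = 0}) (θ := 3 / 4)
    (hmeas (measurableSet_singleton 0))
    (measure_setOf_eq_inter_ne_zero measurableSet_Ico (hval.mono fun _ => Or.symm) hne₁)
    (by norm_num)
  obtain ⟨r, ⟨⟨a₁, ha₁, ha₁', hmean₁⟩, ⟨a₀, ha₀, ha₀', hmean₀⟩⟩, hr, hrδ⟩ :=
    ((hdense₁.and hdense₀).and (Ioo_mem_nhdsGT hδ)).exists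
  rw [← intervalIntegral_eq_measureReal_of_ae_zero_or_one hmeas hval (by linarith)] at hmean₁
  have hmean₀' := intervalIntegral_eq_sub_measureReal_of_ae_zero_or_one hmeas hval
    (a := a₀) (b := a₀ + r) (by linarith)
  obtain ⟨c, hc, hmean⟩ := exists_intervalIntegral_add_eq hint r (y := r / 2)
    (a₀ := a₀) (a₁ := a₁) (by rw [mem_uIcc]; left; constructor <;> linarith)
  have hc₀ : -(1:ℝ)/2 ≤ c := (le_min ha₀ ha₁).trans hc.1
  have hc₁ : c + r < 1/2 := by
    linarith [hc.2, max_lt (by linarith : a₀ < 1/2 - r) (by linarith : a₁ < 1/2 - r)]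
  have hosc_c := hoscδ c (c + r) (by linarith) (fun y hy => ⟨hc₀.trans hy.1, hy.2.trans_lt hc₁⟩)
    (by linarith)
  rw [intervalIntegral_integral_abs_sub_of_ae_zero_or_one (hint _ _) hval (by linarith), hmean,
    add_sub_cancel_left] at hosc_c
  have hhalf : 1 / r ^ 2 * (2 * (r / 2) * (r - r / 2)) = 1 / 2 := by field_simp; ring
  linarith

/-- If `g` is 1-periodic, measurable, `{0,1}`-valued a.e., and satisfies the uniform
vanishing averaged-oscillation condition
`lim_{|I|→0} |I|⁻² ∫_I∫_I |g(x)-g(y)| dx dy = 0` over intervals `I ⊆ [-1/2,1/2)`,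
then `g = 0` a.e. or `g = 1` a.e. on `[-1/2,1/2)`. -/
theorem stmt2 (g : ℝ → ℝ) (hmeas : Measurable g)
    (hper : ∀ x : ℝ, g (x + 1) = g x)
    (hval : ∀ᵐ x : ℝ, g x = 0 ∨ g x = 1)
    (hosc : ∀ ε : ℝ, 0 < ε → ∃ δ : ℝ, 0 < δ ∧ ∀ a b : ℝ, a < b →
      Set.Icc a b ⊆ Set.Ico (-(1:ℝ)/2) (1/2) → b - a < δ →
      (1 / (b - a) ^ 2) * ∫ x in a..b, ∫ y in a..b, |g x - g y| ≤ ε) :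
    (∀ᵐ x ∂(volume.restrict (Set.Ico (-(1:ℝ)/2) (1/2))), g x = 0) ∨
    (∀ᵐ x ∂(volume.restrict (Set.Ico (-(1:ℝ)/2) (1/2))), g x = 1) :=
  stmt2_general g hmeas hval hosc
end

section
/- For any measurable set S ⊆ [-1/2,1/2) with 0 < |S| < 1, and any ε > 0, there exists an interval Q ⊆ [-1/2,1/2) with |Q| < ε such that |Q ∩ S| = |Q ∩ Sᶜ| = |Q|/2. -/
/-!
Sliding a window of fixed length `2r` across `[-1/2, 1/2)`, the measure of its intersection with
`S` varies continuously with the centre (the cumulative function `x ↦ |S ∩ (-∞, x]|` is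
1-Lipschitz). By the Lebesgue density theorem there are points of `(-1/2, 1/2)` where `S` has
density `1` and points where it has density `0`; for small `r` the window around the first meets
`S` in more than half its length and the window around the second in less. The intermediate value
theorem then yields a window meeting `S` in exactly half its length.
-/

open MeasureTheory Set Filter Metric Topology

section Window

variable {S : Set ℝ}

lemma measureReal_inter_Iic_eq_add (hS : volume S ≠ ⊤) {u v : ℝ} (huv : u ≤ v) :
    volume.real (S ∩ Iic v) = volume.real (S ∩ Iic u) + volume.real (S ∩ Ioc u v) := by
  have hsplit := measureReal_inter_add_sdiff (μ := volume) (s := S ∩ Iic v)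
    (measurableSet_Iic (a := u)) (measure_ne_top_of_subset inter_subset_left hS)
  have hdiff : (S ∩ Iic v) \ Iic u = S ∩ Ioc u v := by
    ext z
    simp only [Set.mem_sdiff, mem_inter_iff, mem_Iic, mem_Ioc, not_le]
    tauto
  rw [inter_assoc, Iic_inter_Iic, min_eq_right huv, hdiff] at hsplit
  exact hsplit.symm

lemma lipschitzWith_measureReal_inter_Iic (hS : volume S ≠ ⊤) :
    LipschitzWith 1 fun x => volume.real (S ∩ Iic x) := by
  refine LipschitzWith.of_le_add fun x y => ?_
  rcases le_total x y with hxy | hyx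
  · have hmono : volume.real (S ∩ Iic x) ≤ volume.real (S ∩ Iic y) :=
      measureReal_mono (inter_subset_inter_right S (Iic_subset_Iic.2 hxy))
        (measure_ne_top_of_subset inter_subset_left hS)
    linarith [dist_nonneg (x := x) (y := y)]
  · have hIoc : volume.real (S ∩ Ioc y x) ≤ x - y := by
      calc volume.real (S ∩ Ioc y x) ≤ volume.real (Ioc y x) :=
            measureReal_mono inter_subset_right measure_Ioc_lt_top.ne
        _ = x - y := Real.volume_real_Ioc_of_le hyx
    rw [measureReal_inter_Iic_eq_add hS hyx, Real.dist_eq, abs_of_nonneg (sub_nonneg.2 hyx)]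
    linarith

lemma measureReal_inter_Icc_eq_sub (hS : volume S ≠ ⊤) {u v : ℝ} (huv : u ≤ v) :
    volume.real (S ∩ Icc u v) = volume.real (S ∩ Iic v) - volume.real (S ∩ Iic u) := by
  rw [measureReal_inter_Iic_eq_add hS huv, add_sub_cancel_left]
  exact measureReal_congr ((ae_eq_refl S).inter Ioc_ae_eq_Icc).symm

lemma continuous_measureReal_inter_closedBall (hS : volume S ≠ ⊤) {r : ℝ} (hr : 0 ≤ r) :
    Continuous fun x => volume.real (S ∩ closedBall x r) := by
  have hF := (lipschitzWith_measureReal_inter_Iic hS).continuous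
  have hwindow : (fun x => volume.real (S ∩ closedBall x r)) =
      fun x => volume.real (S ∩ Iic (x + r)) - volume.real (S ∩ Iic (x - r)) := by
    funext x
    rw [Real.closedBall_eq_Icc, measureReal_inter_Icc_eq_sub hS (by linarith)]
  rw [hwindow]
  exact (hF.comp (continuous_id.add continuous_const)).sub
    (hF.comp (continuous_id.sub continuous_const))

lemma exists_mem_uIcc_measureReal_inter_closedBall_eq (hS : volume S ≠ ⊤) {r x₀ x₁ : ℝ}
    (hr : 0 ≤ r) (h₀ : volume.real (S ∩ closedBall x₀ r) ≤ r)
    (h₁ : r ≤ volume.real (S ∩ closedBall x₁ r)) :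
    ∃ c ∈ uIcc x₀ x₁, volume.real (S ∩ closedBall c r) = r :=
  intermediate_value_uIcc (continuous_measureReal_inter_closedBall hS hr).continuousOn
    (mem_uIcc.2 (Or.inl ⟨h₀, h₁⟩))

end Window

lemma exists_mem_tendsto_measureReal_inter_closedBall_div {S U : Set ℝ} (hS : MeasurableSet S)
    (hU : MeasurableSet U) (hU0 : volume U ≠ 0) :
    ∃ x ∈ U, Tendsto (fun r => volume.real (S ∩ closedBall x r) / (2 * r)) (𝓝[>] 0)
      (𝓝 (S.indicator 1 x)) := by
  have : (ae (volume.restrict U)).NeBot := ae_neBot.2 (by rwa [Ne, Measure.restrict_eq_zero])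
  obtain ⟨x, hxU, hx⟩ := ((ae_restrict_mem hU).and (ae_restrict_of_ae
    (Besicovitch.ae_tendsto_measure_inter_div_of_measurableSet volume hS))).exists
  refine ⟨x, hxU, ?_⟩
  have hlim := (ENNReal.tendsto_toReal (by by_cases hx : x ∈ S <;> simp [hx])).comp hx
  have hind : (S.indicator 1 x : ENNReal).toReal = S.indicator 1 x := by
    by_cases hx : x ∈ S <;> simp [hx]
  rw [hind] at hlim
  refine hlim.congr' (eventually_mem_nhdsWithin.mono fun r (hr : 0 < r) => ?_)
  simp only [Function.comp_apply, ENNReal.toReal_div, ← measureReal_def,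
    Real.volume_real_closedBall hr.le]

lemma closedBall_subset_of_mem_uIcc {s : Set ℝ} (hs : s.OrdConnected) {x y c r : ℝ}
    (hx : closedBall x r ⊆ s) (hy : closedBall y r ⊆ s) (hc : c ∈ uIcc x y) :
    closedBall c r ⊆ s := by
  intro z hz
  have hshift : ∀ w, w + (z - c) ∈ closedBall w r := fun w => by
    simpa [Real.dist_eq] using hz
  refine hs.uIcc_subset (hx (hshift x)) (hy (hshift y)) ?_
  rcases mem_uIcc.1 hc with ⟨h1, h2⟩ | ⟨h1, h2⟩
  · exact mem_uIcc.2 (Or.inl ⟨by linarith, by linarith⟩)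
  · exact mem_uIcc.2 (Or.inr ⟨by linarith, by linarith⟩)

lemma volume_Icc_inter_eq_half_and_diff_eq_half {S : Set ℝ} (hS : MeasurableSet S) {a b : ℝ}
    (hab : a ≤ b) (h : volume.real (Icc a b ∩ S) = (b - a) / 2) :
    volume (Icc a b ∩ S) = ENNReal.ofReal ((b - a) / 2) ∧
      volume (Icc a b \ S) = ENNReal.ofReal ((b - a) / 2) := by
  have hfin : volume (Icc a b) ≠ ⊤ := measure_Icc_lt_top.ne
  have hsum := measureReal_sdiff_add_inter (μ := volume) (s := Icc a b) hS hfin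
  rw [Real.volume_real_Icc_of_le hab, h] at hsum
  refine ⟨by rw [← h, ofReal_measureReal (measure_ne_top_of_subset inter_subset_left hfin)], ?_⟩
  rw [← ofReal_measureReal (measure_ne_top_of_subset sdiff_subset hfin)]
  congr 1
  linarith

/-- For any measurable `S ⊆ [-1/2,1/2)` with `0 < |S| < 1` and any `ε > 0`, there is an
interval `Q = [a,b] ⊆ [-1/2,1/2)` with `|Q| < ε` such that
`|Q ∩ S| = |Q ∩ Sᶜ| = |Q|/2`. -/
theorem stmt3 (S : Set ℝ) (hS : MeasurableSet S) (hsub : S ⊆ Set.Ico (-(1:ℝ)/2) (1/2))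
    (h0 : 0 < volume S) (h1 : volume S < 1) (ε : ℝ) (hε : 0 < ε) :
    ∃ a b : ℝ, a < b ∧ Set.Icc a b ⊆ Set.Ico (-(1:ℝ)/2) (1/2) ∧ b - a < ε ∧
      volume (Set.Icc a b ∩ S) = ENNReal.ofReal ((b - a) / 2) ∧
      volume (Set.Icc a b \ S) = ENNReal.ofReal ((b - a) / 2) := by
  set I := Ioo (-(1:ℝ)/2) (1/2)
  have hSI : volume (S ∩ I) = volume S := by
    rw [measure_congr ((ae_eq_refl S).inter Ioo_ae_eq_Ico), inter_eq_left.2 hsub]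
  have hIS : 0 < volume (I \ S) := by
    have hI : volume I = 1 := by simp [I, Real.volume_Ioo]; norm_num
    exact (tsub_pos_of_lt (hI ▸ h1)).trans_le le_measure_sdiff
  obtain ⟨x₁, ⟨hx₁S, hx₁I⟩, hx₁⟩ := exists_mem_tendsto_measureReal_inter_closedBall_div hS
    (hS.inter measurableSet_Ioo) (hSI ▸ h0.ne')
  obtain ⟨x₀, ⟨hx₀I, hx₀S⟩, hx₀⟩ := exists_mem_tendsto_measureReal_inter_closedBall_div hS
    (measurableSet_Ioo.diff hS) hIS.ne'
  rw [indicator_of_mem hx₁S, Pi.one_apply] at hx₁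
  rw [indicator_of_notMem hx₀S] at hx₀
  have hsmall : ∀ᶠ r in 𝓝 (0:ℝ), r < ε / 2 ∧ closedBall x₀ r ⊆ I ∧ closedBall x₁ r ⊆ I :=
    (eventually_lt_nhds (half_pos hε)).and
      ((eventually_closedBall_subset (isOpen_Ioo.mem_nhds hx₀I)).and
        (eventually_closedBall_subset (isOpen_Ioo.mem_nhds hx₁I)))
  obtain ⟨r, hr, ⟨hrε, hr₀I, hr₁I⟩, hr₀, hr₁⟩ := (eventually_mem_nhdsWithin.and
    ((hsmall.filter_mono nhdsWithin_le_nhds).and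
      ((hx₀.eventually (eventually_lt_nhds one_half_pos)).and
        (hx₁.eventually (eventually_gt_nhds one_half_lt_one))))).exists
  have h2r : 0 < 2 * r := mul_pos two_pos hr
  obtain ⟨c, hc, hcS⟩ := exists_mem_uIcc_measureReal_inter_closedBall_eq h1.ne_top hr.le
    (by linarith [(div_lt_iff₀ h2r).1 hr₀]) (by linarith [(lt_div_iff₀ h2r).1 hr₁])
  have hcI := closedBall_subset_of_mem_uIcc ordConnected_Ioo hr₀I hr₁I hc
  rw [Real.closedBall_eq_Icc] at hcI hcS
  refine ⟨c - r, c + r, by linarith, hcI.trans Ioo_subset_Ico_self, by linarith,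
    volume_Icc_inter_eq_half_and_diff_eq_half hS (by linarith) ?_⟩
  rw [inter_comm, hcS]
  ring
end
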